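/- arXiv:1410.2020 — 3 statements merged into one kernel-verified Lean document; each statement's English description precedes it below -/
import Mathlib

section
/- (i) For every x ∈ ℂ the series defining Ĉ(x) converges absolutely and every entry of Ĉ is an entire function of x. (ii) For every x ∈ Π₋ and j = 1,2 the column C_j(x) = x^{μ_j}·Ĉ_j(x) is differentiable and satisfies the singular Dirac system B·C_j′(x) + (μ/x)·J·C_j(x) = C_j(x). (iii) det C(x) = 1 for all x ∈ Π₋. -/
/-!
Write the entries of `Ĉ` as `x·O_ν`, `±E_ν` with `E_ν(x) = Σ c_{2k} x^{2k}` and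
`O_ν(x) = Σ c_{2k+1} x^{2k}`. The coefficient ratios tend to `0`, so these series are entire and
can be differentiated termwise, and the recurrences `(2k+2) c_{2k+2} = -c_{2k+1}`,
`(2ν+1+2k) c_{2k+1} = c_{2k}` give `E_ν' = -x O_ν` and `(x O_ν)' = E_ν - 2ν O_ν`.
For `φ = x^ν E_ν`, `ψ = x^ν x O_ν` this reads `φ' = (ν/x) φ - ψ`, `ψ' = φ - (ν/x) ψ`, which is
the Dirac system for `C₂ = (φ, ψ)` when `ν = μ` and for `C₁ = (ψ, -φ)` when `ν = -μ`.
Finally `det C = x^{-μ} x^{μ} (x² O₋ O₊ + E₋ E₊)`, and the bracket has derivative zero because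
the terms `∓2μ x O₋ O₊` cancel, so it equals its value `c₁₀ c₂₀ = 1` at `0`.
-/

open Complex Matrix Set

/-- The slit plane `ℂ ∖ (-∞, 0]`. -/
def PiMinus : Set ℂ := {x : ℂ | x.im ≠ 0 ∨ 0 < x.re}

/-- Even-index coefficients `c_{j,2k}`. -/
noncomputable def cEven (c0 μj : ℂ) (k : ℕ) : ℂ :=
  (-1) ^ k * c0 / (2 ^ k * (Nat.factorial k) *
    ∏ s ∈ Finset.range k, (2 * μj + 1 + 2 * (s : ℂ)))

/-- Odd-index coefficients `c_{j,2k+1}`. -/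
noncomputable def cOdd (c0 μj : ℂ) (k : ℕ) : ℂ :=
  (-1) ^ k * c0 / (2 ^ k * (Nat.factorial k) *
    ∏ s ∈ Finset.range (k + 1), (2 * μj + 1 + 2 * (s : ℂ)))

/-- The `k`-th term of the series defining `Ĉ(x)`. -/
noncomputable def ChatTerm (μ c10 c20 : ℂ) (x : ℂ) (k : ℕ) : Matrix (Fin 2) (Fin 2) ℂ :=
  x ^ (2 * k) • !![x * cOdd c10 (-μ) k, cEven c20 μ k;
                   -(cEven c10 (-μ) k), x * cOdd c20 μ k]

/-- `Ĉ(x)`, the entire matrix factor. -/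
noncomputable def Chat (μ c10 c20 : ℂ) (x : ℂ) : Matrix (Fin 2) (Fin 2) ℂ :=
  ∑' k : ℕ, ChatTerm μ c10 c20 x k

/-- `μ_j` for the two column indices: `μ₁ = -μ` (index 0), `μ₂ = μ` (index 1). -/
noncomputable def muIdx (μ : ℂ) : Fin 2 → ℂ := ![-μ, μ]

/-- The columns `C_j(x) = x^{μ_j} Ĉ_j(x)` of `C(x) = Ĉ(x) H(x)`. -/
noncomputable def Ccol (μ c10 c20 : ℂ) (x : ℂ) (j : Fin 2) : Fin 2 → ℂ :=
  fun i => x ^ (muIdx μ j) * Chat μ c10 c20 x i j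

/-- The matrix `C(x) = Ĉ(x) H(x)`, `H(x) = diag (x^{μ₁}, x^{μ₂})`. -/
noncomputable def Cmat (μ c10 c20 : ℂ) (x : ℂ) : Matrix (Fin 2) (Fin 2) ℂ :=
  Matrix.of fun i j => Ccol μ c10 c20 x j i

open Filter Topology

section Coefficients

variable (c0 ν : ℂ)

lemma cEven_zero : cEven c0 ν 0 = c0 := by simp [cEven]

lemma cEven_succ (k : ℕ) :
    cEven c0 ν (k + 1) = -(2 * ((k : ℂ) + 1))⁻¹ * (2 * ν + 1 + 2 * (k : ℂ))⁻¹ * cEven c0 ν k := by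
  simp only [cEven, Finset.prod_range_succ, pow_succ, Nat.factorial_succ, Nat.cast_mul,
    Nat.cast_succ, div_eq_mul_inv, mul_inv]
  ring

lemma cOdd_succ (k : ℕ) :
    cOdd c0 ν (k + 1) =
      -(2 * ((k : ℂ) + 1))⁻¹ * (2 * ν + 1 + 2 * ((k : ℂ) + 1))⁻¹ * cOdd c0 ν k := by
  simp only [cOdd, Finset.prod_range_succ (n := k + 1), pow_succ, Nat.factorial_succ,
    Nat.cast_mul, Nat.cast_succ, div_eq_mul_inv, mul_inv]
  ring

lemma two_mul_add_two_mul_cEven_succ (k : ℕ) :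
    (2 * (k : ℂ) + 2) * cEven c0 ν (k + 1) = -cOdd c0 ν k := by
  have hk : (2 * (k : ℂ) + 2) ≠ 0 := by norm_cast
  simp only [cEven, cOdd, pow_succ, Nat.factorial_succ]
  push_cast
  field_simp

lemma cEven_eq_mul_cOdd {k : ℕ} (hk : 2 * ν + 1 + 2 * (k : ℂ) ≠ 0) :
    cEven c0 ν k = (2 * ν + 1 + 2 * (k : ℂ)) * cOdd c0 ν k := by
  simp only [cEven, cOdd, Finset.prod_range_succ]
  field_simp

end Coefficients

section RapidDecay

lemma tendsto_inv_const_add_natCast {f : ℕ → ℕ} (hf : Tendsto f atTop atTop) (b : ℂ) :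
    Tendsto (fun k => (b + (f k : ℂ))⁻¹) atTop (𝓝 0) :=
  tendsto_inv₀_cobounded.comp <|
    (tendsto_const_add_cobounded b).comp <| tendsto_natCast_atTop_cobounded.comp hf

lemma summable_succ_mul_norm_mul_pow_of_ratio {a q : ℕ → ℂ} (hq : Tendsto q atTop (𝓝 0))
    (ha : ∀ k, a (k + 1) = q k * a k) {R : ℝ} (hR : 0 ≤ R) :
    Summable fun k : ℕ => ((k : ℝ) + 1) * ‖a k‖ * R ^ k := by
  refine summable_of_ratio_norm_eventually_le (r := 1 / 2) (by norm_num) ?_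
  have hsmall : ∀ᶠ k in atTop, ‖q k‖ * R ≤ 1 / 4 := by
    have : Tendsto (fun k => ‖q k‖ * R) atTop (𝓝 0) := by
      simpa using (tendsto_norm_zero.comp hq).mul_const R
    exact this.eventually_le_const (by norm_num)
  filter_upwards [hsmall] with k hk
  rw [Real.norm_of_nonneg (by positivity), Real.norm_of_nonneg (by positivity), ha, norm_mul]
  push_cast
  have hA : 0 ≤ ‖a k‖ * R ^ k := by positivity
  calc ((k : ℝ) + 1 + 1) * (‖q k‖ * ‖a k‖) * R ^ (k + 1)
      = ((k : ℝ) + 2) * (‖q k‖ * R) * (‖a k‖ * R ^ k) := by ring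
    _ ≤ (2 * ((k : ℝ) + 1)) * (1 / 4) * (‖a k‖ * R ^ k) := by gcongr; linarith
    _ = 1 / 2 * (((k : ℝ) + 1) * ‖a k‖ * R ^ k) := by ring

lemma tendsto_coeff_ratio (b : ℂ) :
    Tendsto (fun k : ℕ => -(2 * ((k : ℂ) + 1))⁻¹ * (b + 2 * (k : ℂ))⁻¹) atTop (𝓝 0) := by
  have h1 := tendsto_inv_const_add_natCast (f := fun k => 2 * (k + 1))
    (tendsto_id.const_mul_atTop' two_pos |>.comp (tendsto_add_atTop_nat 1)) 0
  have h2 := tendsto_inv_const_add_natCast (f := fun k => 2 * k)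
    (tendsto_id.const_mul_atTop' two_pos) b
  simpa using (h1.mul h2).neg

variable (c0 ν : ℂ)

lemma summable_cEven {R : ℝ} (hR : 0 ≤ R) :
    Summable fun k : ℕ => ((k : ℝ) + 1) * ‖cEven c0 ν k‖ * R ^ k :=
  summable_succ_mul_norm_mul_pow_of_ratio (tendsto_coeff_ratio _) (cEven_succ c0 ν) hR

lemma summable_cOdd {R : ℝ} (hR : 0 ≤ R) :
    Summable fun k : ℕ => ((k : ℝ) + 1) * ‖cOdd c0 ν k‖ * R ^ k := by
  refine summable_succ_mul_norm_mul_pow_of_ratio (tendsto_coeff_ratio (2 * ν + 3)) (fun k => ?_) hR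
  rw [cOdd_succ]
  ring

end RapidDecay

section PowerSeries

lemma norm_mul_pow_le_of_le_two_mul_add_one {c y : ℂ} {R : ℝ} {m k : ℕ} (hm : m ≤ 2 * k + 1)
    (hR : 1 ≤ R) (hy : ‖y‖ ≤ R) : ‖c * y ^ m‖ ≤ R * (‖c‖ * (R ^ 2) ^ k) := by
  rw [norm_mul, norm_pow]
  calc ‖c‖ * ‖y‖ ^ m ≤ ‖c‖ * R ^ (2 * k + 1) := by
        gcongr
        exact (pow_le_pow_left₀ (norm_nonneg y) hy m).trans (pow_le_pow_right₀ hR hm)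
    _ = R * (‖c‖ * (R ^ 2) ^ k) := by ring

variable {a : ℕ → ℂ} (ha : ∀ R : ℝ, 0 ≤ R → Summable fun k : ℕ => ((k : ℝ) + 1) * ‖a k‖ * R ^ k)
include ha

lemma summable_norm_mul_pow {n : ℕ → ℕ} (hn : ∀ k, n k ≤ 2 * k + 1) (x : ℂ) :
    Summable fun k => ‖a k * x ^ n k‖ := by
  have hR : 1 ≤ ‖x‖ + 1 := by linarith [norm_nonneg x]
  refine .of_nonneg_of_le (fun _ => norm_nonneg _) (fun k => ?_)
    ((ha ((‖x‖ + 1) ^ 2) (by positivity)).mul_left (‖x‖ + 1))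
  refine (norm_mul_pow_le_of_le_two_mul_add_one (hn k) hR (by linarith)).trans ?_
  gcongr
  nlinarith [norm_nonneg (a k), pow_nonneg (sq_nonneg (‖x‖ + 1)) k]

lemma hasDerivAt_tsum_mul_pow {n : ℕ → ℕ} (hn : ∀ k, n k ≤ 2 * k + 1) (x : ℂ) :
    HasDerivAt (fun y => ∑' k, a k * y ^ n k) (∑' k, (n k : ℂ) * a k * x ^ (n k - 1)) x := by
  set R := ‖x‖ + 1
  have hR : 1 ≤ R := by linarith [norm_nonneg x]
  have hderiv : ∀ k (y : ℂ),
      HasDerivAt (fun y => a k * y ^ n k) ((n k : ℂ) * a k * y ^ (n k - 1)) y :=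
    fun k y => by simpa [mul_comm, mul_assoc] using (hasDerivAt_pow (n k) y).const_mul (a k)
  have hbound : ∀ k, ∀ y ∈ Metric.ball (0 : ℂ) R,
      ‖(n k : ℂ) * a k * y ^ (n k - 1)‖ ≤ 2 * R * (((k : ℝ) + 1) * ‖a k‖ * (R ^ 2) ^ k) := by
    intro k y hy
    rw [mem_ball_zero_iff] at hy
    rw [mul_assoc, norm_mul, Complex.norm_natCast]
    calc (n k : ℝ) * ‖a k * y ^ (n k - 1)‖ ≤ (2 * k + 1) * (R * (‖a k‖ * (R ^ 2) ^ k)) := by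
          gcongr
          · exact_mod_cast hn k
          · exact norm_mul_pow_le_of_le_two_mul_add_one (by have := hn k; omega) hR hy.le
      _ ≤ 2 * R * (((k : ℝ) + 1) * ‖a k‖ * (R ^ 2) ^ k) := by
          have : 0 ≤ R * (‖a k‖ * (R ^ 2) ^ k) := by positivity
          nlinarith
  have hx : x ∈ Metric.ball (0 : ℂ) R := mem_ball_zero_iff.2 (by linarith)
  exact hasDerivAt_tsum_of_isPreconnected ((ha (R ^ 2) (by positivity)).mul_left (2 * R))
    Metric.isOpen_ball (convex_ball 0 R).isPreconnected (fun k y _ => hderiv k y) hbound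
    hx (summable_norm_mul_pow ha hn x).of_norm hx

end PowerSeries

section EvenPowerSeries

noncomputable def evenPowerSeries (a : ℕ → ℂ) (x : ℂ) : ℂ := ∑' k, a k * x ^ (2 * k)

lemma evenPowerSeries_zero (a : ℕ → ℂ) : evenPowerSeries a 0 = a 0 := by
  rw [evenPowerSeries, tsum_eq_single 0 fun k hk => by simp [hk]]
  simp

lemma evenPowerSeries_neg (a : ℕ → ℂ) (x : ℂ) :
    evenPowerSeries (fun k => -a k) x = -evenPowerSeries a x := by
  simp only [evenPowerSeries, neg_mul, tsum_neg]

variable {a : ℕ → ℂ} (ha : ∀ R : ℝ, 0 ≤ R → Summable fun k : ℕ => ((k : ℝ) + 1) * ‖a k‖ * R ^ k)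
include ha

lemma summable_mul_pow_two_mul (x : ℂ) : Summable fun k => a k * x ^ (2 * k) :=
  (summable_norm_mul_pow ha (fun k => by omega) x).of_norm

lemma hasDerivAt_evenPowerSeries (x : ℂ) :
    HasDerivAt (evenPowerSeries a)
      (x * evenPowerSeries (fun k => (2 * k + 2) * a (k + 1)) x) x := by
  refine (hasDerivAt_tsum_mul_pow ha (n := fun k => 2 * k) (fun k => by omega) x).congr_deriv ?_
  rw [← Nat.succ_injective.tsum_eq fun k hk => ?_, evenPowerSeries, ← tsum_mul_left]
  · refine tsum_congr fun k => ?_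
    rw [Nat.succ_eq_add_one, show 2 * (k + 1) - 1 = 2 * k + 1 by omega]
    push_cast
    ring
  · cases k with
    | zero => simp at hk
    | succ k => exact ⟨k, rfl⟩

lemma hasDerivAt_mul_evenPowerSeries (x : ℂ) :
    HasDerivAt (fun y => y * evenPowerSeries a y)
      (evenPowerSeries (fun k => (2 * k + 1) * a k) x) x := by
  have hodd : (fun y => y * evenPowerSeries a y) = fun y => ∑' k, a k * y ^ (2 * k + 1) := by
    ext y
    rw [evenPowerSeries, ← tsum_mul_left]
    exact tsum_congr fun k => by ring
  rw [hodd]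
  refine (hasDerivAt_tsum_mul_pow ha (n := fun k => 2 * k + 1) (fun k => le_rfl) x).congr_deriv ?_
  refine tsum_congr fun k => ?_
  simp only [Nat.add_sub_cancel]
  push_cast
  ring

end EvenPowerSeries

section Solutions

variable (c0 ν : ℂ)

lemma hasDerivAt_evenPowerSeries_cEven (x : ℂ) :
    HasDerivAt (evenPowerSeries (cEven c0 ν)) (-(x * evenPowerSeries (cOdd c0 ν) x)) x := by
  have h := hasDerivAt_evenPowerSeries (fun _ => summable_cEven c0 ν) x
  simp_rw [two_mul_add_two_mul_cEven_succ, evenPowerSeries_neg, mul_neg] at h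
  exact h

lemma hasDerivAt_mul_evenPowerSeries_cOdd (h : ∀ k : ℕ, 2 * ν + 1 + 2 * (k : ℂ) ≠ 0) (x : ℂ) :
    HasDerivAt (fun y => y * evenPowerSeries (cOdd c0 ν) y)
      (evenPowerSeries (cEven c0 ν) x - 2 * ν * evenPowerSeries (cOdd c0 ν) x) x := by
  refine (hasDerivAt_mul_evenPowerSeries (fun _ => summable_cOdd c0 ν) x).congr_deriv ?_
  have hcoeff : ∀ k : ℕ, (2 * (k : ℂ) + 1) * cOdd c0 ν k * x ^ (2 * k) =
      cEven c0 ν k * x ^ (2 * k) - 2 * ν * (cOdd c0 ν k * x ^ (2 * k)) := fun k => by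
    rw [cEven_eq_mul_cOdd c0 ν (h k)]
    ring
  rw [evenPowerSeries, tsum_congr hcoeff,
    (summable_mul_pow_two_mul (fun _ => summable_cEven c0 ν) x).tsum_sub
      ((summable_mul_pow_two_mul (fun _ => summable_cOdd c0 ν) x).mul_left _),
    tsum_mul_left, evenPowerSeries, evenPowerSeries]

lemma wronskian_eq (c1 : ℂ) (h : ∀ k : ℕ, 2 * ν + 1 + 2 * (k : ℂ) ≠ 0)
    (h' : ∀ k : ℕ, 2 * (-ν) + 1 + 2 * (k : ℂ) ≠ 0) (x : ℂ) :
    x * evenPowerSeries (cOdd c0 ν) x * (x * evenPowerSeries (cOdd c1 (-ν)) x) +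
      evenPowerSeries (cEven c0 ν) x * evenPowerSeries (cEven c1 (-ν)) x = c0 * c1 := by
  set W := fun y => y * evenPowerSeries (cOdd c0 ν) y * (y * evenPowerSeries (cOdd c1 (-ν)) y) +
      evenPowerSeries (cEven c0 ν) y * evenPowerSeries (cEven c1 (-ν)) y
  have hW : ∀ y, HasDerivAt W 0 y := fun y =>
    (((hasDerivAt_mul_evenPowerSeries_cOdd c0 ν h y).mul
      (hasDerivAt_mul_evenPowerSeries_cOdd c1 (-ν) h' y)).add
      ((hasDerivAt_evenPowerSeries_cEven c0 ν y).mul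
        (hasDerivAt_evenPowerSeries_cEven c1 (-ν) y))).congr_deriv (by ring)
  have hconst := is_const_of_deriv_eq_zero (fun y => (hW y).differentiableAt)
    (fun y => (hW y).deriv) x 0
  simpa [W, evenPowerSeries_zero, cEven_zero] using hconst

end Solutions

section Chat

variable (μ c10 c20 : ℂ)

lemma ChatTerm_eq (x : ℂ) (k : ℕ) :
    ChatTerm μ c10 c20 x k =
      !![cOdd c10 (-μ) k * x ^ (2 * k + 1), cEven c20 μ k * x ^ (2 * k);
        -(cEven c10 (-μ) k * x ^ (2 * k)), cOdd c20 μ k * x ^ (2 * k + 1)] := by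
  ext i j
  fin_cases i <;> fin_cases j <;>
    simp only [ChatTerm, Fin.zero_eta, Fin.mk_one, Matrix.smul_apply, of_apply, cons_val',
      cons_val_zero, cons_val_one, cons_val_fin_one, smul_eq_mul] <;> ring

lemma summable_norm_ChatTerm (x : ℂ) (i j : Fin 2) :
    Summable fun k => ‖ChatTerm μ c10 c20 x k i j‖ := by
  have hodd (c0 ν : ℂ) := summable_norm_mul_pow (fun _ => summable_cOdd c0 ν)
    (n := fun k => 2 * k + 1) (fun _ => le_rfl) x
  have heven (c0 ν : ℂ) := summable_norm_mul_pow (fun _ => summable_cEven c0 ν)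
    (n := fun k => 2 * k) (fun _ => by omega) x
  fin_cases i <;> fin_cases j
  · simpa [ChatTerm_eq] using hodd c10 (-μ)
  · simpa [ChatTerm_eq] using heven c20 μ
  · simpa [ChatTerm_eq] using heven c10 (-μ)
  · simpa [ChatTerm_eq] using hodd c20 μ

lemma Chat_eq (x : ℂ) :
    Chat μ c10 c20 x =
      !![x * evenPowerSeries (cOdd c10 (-μ)) x, evenPowerSeries (cEven c20 μ) x;
        -evenPowerSeries (cEven c10 (-μ)) x, x * evenPowerSeries (cOdd c20 μ) x] := by
  have hs : Summable (ChatTerm μ c10 c20 x) := Pi.summable.2 fun i => Pi.summable.2 fun j =>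
    (summable_norm_ChatTerm μ c10 c20 x i j).of_norm
  have hentry (i j : Fin 2) : Chat μ c10 c20 x i j = ∑' k, ChatTerm μ c10 c20 x k i j :=
    (congrFun (tsum_apply hs) j).trans (tsum_apply (Pi.summable.1 hs i))
  ext i j
  rw [hentry]
  fin_cases i <;> fin_cases j <;>
    simp [ChatTerm_eq, evenPowerSeries, ← tsum_mul_left, tsum_neg, pow_succ, mul_comm,
      mul_left_comm]

lemma differentiable_Chat_apply (i j : Fin 2) :
    Differentiable ℂ fun x => Chat μ c10 c20 x i j := by
  have hE (c0 ν : ℂ) : Differentiable ℂ (evenPowerSeries (cEven c0 ν)) := fun x =>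
    (hasDerivAt_evenPowerSeries_cEven c0 ν x).differentiableAt
  have hxO (c0 ν : ℂ) : Differentiable ℂ fun x => x * evenPowerSeries (cOdd c0 ν) x := fun x =>
    (hasDerivAt_mul_evenPowerSeries (fun _ => summable_cOdd c0 ν) x).differentiableAt
  fin_cases i <;> fin_cases j <;> simp only [Chat_eq] <;> simp [hE, hxO]

end Chat

section Dirac

def SolvesDiracAt (μ : ℂ) (f : ℂ → Fin 2 → ℂ) (x : ℂ) : Prop :=
  DifferentiableAt ℂ f x ∧
    !![0, 1; -1, 0] *ᵥ deriv f x + (μ / x) • !![0, 1; 1, 0] *ᵥ f x = f x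

variable {φ ψ : ℂ → ℂ} {μ x : ℂ}

lemma solvesDiracAt_of_hasDerivAt {f : ℂ → Fin 2 → ℂ} {f' : Fin 2 → ℂ} (hf : HasDerivAt f f' x)
    (h0 : f' 1 + μ / x * f x 1 = f x 0) (h1 : -f' 0 + μ / x * f x 0 = f x 1) :
    SolvesDiracAt μ f x := by
  refine ⟨hf.differentiableAt, ?_⟩
  rw [hf.deriv]
  ext i
  fin_cases i
  · simpa [vecHead, vecTail] using h0
  · simpa [vecHead, vecTail] using h1

lemma hasDerivAt_pair {φ' ψ' : ℂ} (hφ : HasDerivAt φ φ' x) (hψ : HasDerivAt ψ ψ' x) :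
    HasDerivAt (fun y => ![φ y, ψ y]) ![φ', ψ'] x :=
  hasDerivAt_pi.2 fun i => by fin_cases i <;> simpa

lemma solvesDiracAt_pair (hφ : HasDerivAt φ (μ / x * φ x - ψ x) x)
    (hψ : HasDerivAt ψ (φ x - μ / x * ψ x) x) :
    SolvesDiracAt μ (fun y => ![φ y, ψ y]) x :=
  solvesDiracAt_of_hasDerivAt (hasDerivAt_pair hφ hψ) (by simp) (by simp)

lemma solvesDiracAt_pair_neg (hφ : HasDerivAt φ (-μ / x * φ x - ψ x) x)
    (hψ : HasDerivAt ψ (φ x - -μ / x * ψ x) x) :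
    SolvesDiracAt μ (fun y => ![ψ y, -φ y]) x :=
  solvesDiracAt_of_hasDerivAt (hasDerivAt_pair hψ hφ.neg) (by simp only [cons_val_zero, cons_val_one, cons_val_fin_one]; ring)
    (by simp only [cons_val_zero, cons_val_one, cons_val_fin_one]; ring)

end Dirac

section Columns

lemma PiMinus_eq_slitPlane : PiMinus = slitPlane := by
  ext x
  exact or_comm

lemma hasDerivAt_cpow_mul {f : ℂ → ℂ} {f' x : ℂ} (ν : ℂ) (hx : x ∈ slitPlane)
    (hf : HasDerivAt f f' x) :
    HasDerivAt (fun y => y ^ ν * f y) (ν / x * (x ^ ν * f x) + x ^ ν * f') x := by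
  refine ((hasStrictDerivAt_cpow_const hx).hasDerivAt.mul hf).congr_deriv ?_
  rw [cpow_sub _ _ (slitPlane_ne_zero hx), cpow_one]
  ring

variable (c0 ν : ℂ) {x : ℂ}

lemma hasDerivAt_cpow_mul_evenPowerSeries_cEven (hx : x ∈ slitPlane) :
    HasDerivAt (fun y => y ^ ν * evenPowerSeries (cEven c0 ν) y)
      (ν / x * (x ^ ν * evenPowerSeries (cEven c0 ν) x) -
        x ^ ν * (x * evenPowerSeries (cOdd c0 ν) x)) x :=
  (hasDerivAt_cpow_mul ν hx (hasDerivAt_evenPowerSeries_cEven c0 ν x)).congr_deriv (by ring)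

lemma hasDerivAt_cpow_mul_mul_evenPowerSeries_cOdd
    (h : ∀ k : ℕ, 2 * ν + 1 + 2 * (k : ℂ) ≠ 0) (hx : x ∈ slitPlane) :
    HasDerivAt (fun y => y ^ ν * (y * evenPowerSeries (cOdd c0 ν) y))
      (x ^ ν * evenPowerSeries (cEven c0 ν) x -
        ν / x * (x ^ ν * (x * evenPowerSeries (cOdd c0 ν) x))) x := by
  refine (hasDerivAt_cpow_mul ν hx (hasDerivAt_mul_evenPowerSeries_cOdd c0 ν h x)).congr_deriv ?_
  field_simp [slitPlane_ne_zero hx]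
  ring

variable (μ c10 c20 : ℂ)

lemma solvesDiracAt_Ccol_zero (h : ∀ k : ℕ, 2 * (-μ) + 1 + 2 * (k : ℂ) ≠ 0)
    (hx : x ∈ slitPlane) : SolvesDiracAt μ (fun y => Ccol μ c10 c20 y 0) x := by
  have hcol : (fun y => Ccol μ c10 c20 y 0) = fun y =>
      ![y ^ (-μ) * (y * evenPowerSeries (cOdd c10 (-μ)) y),
        -(y ^ (-μ) * evenPowerSeries (cEven c10 (-μ)) y)] := by
    ext y i
    fin_cases i <;> simp [Ccol, Chat_eq, muIdx]
  rw [hcol]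
  exact solvesDiracAt_pair_neg (hasDerivAt_cpow_mul_evenPowerSeries_cEven c10 (-μ) hx)
    (hasDerivAt_cpow_mul_mul_evenPowerSeries_cOdd c10 (-μ) h hx)

lemma solvesDiracAt_Ccol_one (h : ∀ k : ℕ, 2 * μ + 1 + 2 * (k : ℂ) ≠ 0)
    (hx : x ∈ slitPlane) : SolvesDiracAt μ (fun y => Ccol μ c10 c20 y 1) x := by
  have hcol : (fun y => Ccol μ c10 c20 y 1) = fun y =>
      ![y ^ μ * evenPowerSeries (cEven c20 μ) y,
        y ^ μ * (y * evenPowerSeries (cOdd c20 μ) y)] := by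
    ext y i
    fin_cases i <;> simp [Ccol, Chat_eq, muIdx]
  rw [hcol]
  exact solvesDiracAt_pair (hasDerivAt_cpow_mul_evenPowerSeries_cEven c20 μ hx)
    (hasDerivAt_cpow_mul_mul_evenPowerSeries_cOdd c20 μ h hx)

lemma det_Cmat (hc : c10 * c20 = 1) (hneg : ∀ k : ℕ, 2 * (-μ) + 1 + 2 * (k : ℂ) ≠ 0)
    (hpos : ∀ k : ℕ, 2 * μ + 1 + 2 * (k : ℂ) ≠ 0) (hx : x ≠ 0) :
    (Cmat μ c10 c20 x).det = 1 := by
  have hpow : x ^ (-μ) * x ^ μ = 1 := by rw [← cpow_add _ _ hx, neg_add_cancel, cpow_zero]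
  rw [det_fin_two]
  simp only [Cmat, Ccol, muIdx, Chat_eq, of_apply, cons_val', cons_val_fin_one, cons_val_zero,
    cons_val_one]
  linear_combination (x ^ (-μ) * x ^ μ) * (wronskian_eq c20 μ c10 hpos hneg x + hc) + hpow

end Columns

theorem stmt0_general (μ c10 c20 : ℂ) (hc : c10 * c20 = 1)
    (hden : ∀ j : Fin 2, ∀ s : ℕ, 2 * muIdx μ j + 1 + 2 * (s : ℂ) ≠ 0) :
    -- (i) absolute convergence of each entry of the series, and the entries
    -- of Ĉ are entire functions of x
    (∀ x : ℂ, ∀ i j : Fin 2,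
      Summable fun k : ℕ => ‖ChatTerm μ c10 c20 x k i j‖) ∧
    (∀ i j : Fin 2, AnalyticOnNhd ℂ (fun x : ℂ => Chat μ c10 c20 x i j) Set.univ) ∧
    -- (ii) each column C_j solves the singular Dirac system on Π₋
    (∀ x ∈ PiMinus, ∀ j : Fin 2,
      DifferentiableAt ℂ (fun y => Ccol μ c10 c20 y j) x ∧
      (!![0, 1; -1, 0] : Matrix (Fin 2) (Fin 2) ℂ).mulVec
          (deriv (fun y => Ccol μ c10 c20 y j) x) +
        (μ / x) • (!![0, 1; 1, 0] : Matrix (Fin 2) (Fin 2) ℂ).mulVec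
          (Ccol μ c10 c20 x j) =
        Ccol μ c10 c20 x j) ∧
    -- (iii) det C(x) = 1 on Π₋
    (∀ x ∈ PiMinus, (Cmat μ c10 c20 x).det = 1) := by
  have hneg : ∀ k : ℕ, 2 * (-μ) + 1 + 2 * (k : ℂ) ≠ 0 := hden 0
  have hpos : ∀ k : ℕ, 2 * μ + 1 + 2 * (k : ℂ) ≠ 0 := hden 1
  rw [PiMinus_eq_slitPlane]
  refine ⟨summable_norm_ChatTerm μ c10 c20,
    fun i j => analyticOnNhd_univ_iff_differentiable.2 (differentiable_Chat_apply μ c10 c20 i j),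
    fun x hx j => ?_, fun x hx => det_Cmat μ c10 c20 hc hneg hpos (slitPlane_ne_zero hx)⟩
  fin_cases j
  exacts [solvesDiracAt_Ccol_zero μ c10 c20 hneg hx, solvesDiracAt_Ccol_one μ c10 c20 hpos hx]

theorem stmt0 (μ c10 c20 : ℂ) (hμ : 0 < μ.re) (hc : c10 * c20 = 1)
    (hden : ∀ j : Fin 2, ∀ s : ℕ, 2 * muIdx μ j + 1 + 2 * (s : ℂ) ≠ 0) :
    -- (i) absolute convergence of each entry of the series, and the entries
    -- of Ĉ are entire functions of x
    (∀ x : ℂ, ∀ i j : Fin 2,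
      Summable fun k : ℕ => ‖ChatTerm μ c10 c20 x k i j‖) ∧
    (∀ i j : Fin 2, AnalyticOnNhd ℂ (fun x : ℂ => Chat μ c10 c20 x i j) Set.univ) ∧
    -- (ii) each column C_j solves the singular Dirac system on Π₋
    (∀ x ∈ PiMinus, ∀ j : Fin 2,
      DifferentiableAt ℂ (fun y => Ccol μ c10 c20 y j) x ∧
      (!![0, 1; -1, 0] : Matrix (Fin 2) (Fin 2) ℂ).mulVec
          (deriv (fun y => Ccol μ c10 c20 y j) x) +
        (μ / x) • (!![0, 1; 1, 0] : Matrix (Fin 2) (Fin 2) ℂ).mulVec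
          (Ccol μ c10 c20 x j) =
        Ccol μ c10 c20 x j) ∧
    -- (iii) det C(x) = 1 on Π₋
    (∀ x ∈ PiMinus, (Cmat μ c10 c20 x).det = 1) :=
  stmt0_general μ c10 c20 hc hden
end

section
/- Let D₊ = {x ∈ ℂ : arg x ∈ (0,π)}. Suppose C, e : Π₋ → M₂(ℂ) satisfy: det C(x) = 1 and det e(x) = 2i for all x ∈ Π₋; for every x ∈ D₊ (noting −x ∈ Π₋) the column symmetries K·C_j(−x) = (−1)^j·e^{−iπμ_j}·C_j(x) (j = 1,2) and −K·e₂(−x) = e₁(x) hold; and there is a constant matrix γ⁰ ∈ M₂(ℂ) with e(x) = C(x)·γ⁰ for all x ∈ Π₋. Then: det γ⁰ = 2i; γ⁰₁₁ = e^{−iπμ₁}·γ⁰₁₂; γ⁰₂₁ = −e^{−iπμ₂}·γ⁰₂₂; cos(πμ) ≠ 0; and γ⁰₁₁·γ⁰₂₁ = 1/(i·cos(πμ)). -/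
open Complex Matrix Set

noncomputable def Kmat : Matrix (Fin 2) (Fin 2) ℂ := !![1, 0; 0, -1]

/-- `D₊ = {x : arg x ∈ (0, π)}` (the open upper half plane). -/
def Dplus : Set ℂ := {x : ℂ | 0 < Complex.arg x ∧ Complex.arg x < Real.pi}

theorem stmt7 (μ : ℂ) (hμ : 0 < μ.re)
    (C e : ℂ → Matrix (Fin 2) (Fin 2) ℂ)
    (hdetC : ∀ x ∈ PiMinus, (C x).det = 1)
    (hdete : ∀ x ∈ PiMinus, (e x).det = 2 * Complex.I)
    -- column symmetry for C: K·C_j(-x) = (-1)^j e^{-iπμ_j} C_j(x), μ₁ = -μ, μ₂ = μ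
    (hsymC1 : ∀ x ∈ Dplus,
      Kmat.mulVec (fun i => C (-x) i 0) =
        (-Complex.exp (-(Real.pi : ℂ) * Complex.I * (-μ))) • (fun i => C x i 0))
    (hsymC2 : ∀ x ∈ Dplus,
      Kmat.mulVec (fun i => C (-x) i 1) =
        (Complex.exp (-(Real.pi : ℂ) * Complex.I * μ)) • (fun i => C x i 1))
    -- column symmetry for e: -K·e₂(-x) = e₁(x)
    (hsyme : ∀ x ∈ Dplus,
      -(Kmat.mulVec (fun i => e (-x) i 1)) = (fun i => e x i 0))
    (γ : Matrix (Fin 2) (Fin 2) ℂ)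
    (hγ : ∀ x ∈ PiMinus, e x = C x * γ) :
    γ.det = 2 * Complex.I ∧
    γ 0 0 = Complex.exp (-(Real.pi : ℂ) * Complex.I * (-μ)) * γ 0 1 ∧
    γ 1 0 = -(Complex.exp (-(Real.pi : ℂ) * Complex.I * μ) * γ 1 1) ∧
    Complex.cos (Real.pi * μ) ≠ 0 ∧
    γ 0 0 * γ 1 0 = 1 / (Complex.I * Complex.cos (Real.pi * μ)) := by
  have hIpi : (Complex.I : ℂ) ∈ PiMinus := Or.inl (by simp)
  have hnIpi : (-Complex.I : ℂ) ∈ PiMinus := Or.inl (by simp)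
  have hID : (Complex.I : ℂ) ∈ Dplus := by
    constructor
    · rw [Complex.arg_I]; positivity
    · rw [Complex.arg_I]; linarith [Real.pi_pos]
  set a : ℂ := Complex.exp ((Real.pi : ℂ) * Complex.I * μ) with ha
  set b : ℂ := Complex.exp (-((Real.pi : ℂ) * Complex.I * μ)) with hb
  -- symmetry of columns of C at x = I
  have hc1 := congrFun (hsymC1 Complex.I hID) 0
  have hc2 := congrFun (hsymC1 Complex.I hID) 1
  have hc3 := congrFun (hsymC2 Complex.I hID) 0
  have hc4 := congrFun (hsymC2 Complex.I hID) 1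
  simp [Kmat, Matrix.mulVec, dotProduct, Fin.sum_univ_two] at hc1 hc2 hc3 hc4
  rw [← ha] at hc1 hc2
  rw [← hb] at hc3 hc4
  have he1 := congrFun (hsyme Complex.I hID) 0
  have he2 := congrFun (hsyme Complex.I hID) 1
  simp [Kmat, Matrix.mulVec, dotProduct, Fin.sum_univ_two] at he1 he2
  -- entries of e via γ
  have hg : ∀ x ∈ PiMinus, ∀ i j, e x i j = C x i 0 * γ 0 j + C x i 1 * γ 1 j := by
    intro x hx i j
    rw [hγ x hx, Matrix.mul_apply, Fin.sum_univ_two]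
  have hg00 := hg Complex.I hIpi 0 0
  have hg10 := hg Complex.I hIpi 1 0
  have hgn01 := hg (-Complex.I) hnIpi 0 1
  have hgn11 := hg (-Complex.I) hnIpi 1 1
  have hdet : C Complex.I 0 0 * C Complex.I 1 1 - C Complex.I 0 1 * C Complex.I 1 0 = 1 := by
    have := hdetC Complex.I hIpi
    rwa [Matrix.det_fin_two] at this
  -- The two key equations
  have E1 : a * C Complex.I 0 0 * γ 0 1 - b * C Complex.I 0 1 * γ 1 1
      = C Complex.I 0 0 * γ 0 0 + C Complex.I 0 1 * γ 1 0 := by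
    linear_combination hg00 + he1 + hgn01 + γ 0 1 * hc1 + γ 1 1 * hc3
  have E2 : a * C Complex.I 1 0 * γ 0 1 - b * C Complex.I 1 1 * γ 1 1
      = C Complex.I 1 0 * γ 0 0 + C Complex.I 1 1 * γ 1 0 := by
    linear_combination hg10 + he2 - hgn11 - γ 0 1 * hc2 + γ 1 1 * hc4
  have key1 : γ 0 0 = a * γ 0 1 := by
    linear_combination (C Complex.I 0 1) * E2 - (C Complex.I 1 1) * E1
      + (a * γ 0 1 - γ 0 0) * hdet
  have key2 : γ 1 0 = -(b * γ 1 1) := by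
    linear_combination (C Complex.I 1 0) * E1 - (C Complex.I 0 0) * E2
      - (b * γ 1 1 + γ 1 0) * hdet
  have hdetγ : γ.det = 2 * Complex.I := by
    have h := hdete Complex.I hIpi
    rwa [hγ Complex.I hIpi, Matrix.det_mul, hdetC Complex.I hIpi, one_mul] at h
  have hab : a * b = 1 := by
    rw [ha, hb, ← Complex.exp_add]; simp
  have hcos : 2 * Complex.cos ((Real.pi : ℂ) * μ) = a + b := by
    rw [Complex.cos, ha, hb]
    ring_nf
  have hdg2 : (a + b) * (γ 0 1 * γ 1 1) = 2 * Complex.I := by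
    have := hdetγ
    rw [Matrix.det_fin_two] at this
    linear_combination this - (γ 1 1) * key1 + (γ 0 1) * key2
  have hcosne : Complex.cos ((Real.pi : ℂ) * μ) ≠ 0 := by
    intro h0
    have hab0 : a + b = 0 := by linear_combination 2 * h0 - hcos
    rw [hab0, zero_mul] at hdg2
    exact (by norm_num : (0:ℂ) ≠ 2 * Complex.I) hdg2
  have ea : Complex.exp (-(Real.pi : ℂ) * Complex.I * (-μ)) = a := by
    rw [ha]; congr 1; ring
  have eb : Complex.exp (-(Real.pi : ℂ) * Complex.I * μ) = b := by
    rw [hb]; congr 1; ring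
  refine ⟨hdetγ, ?_, ?_, hcosne, ?_⟩
  · rw [key1, ea]
  · rw [key2, eb]
  · rw [key1, key2, eq_div_iff (mul_ne_zero Complex.I_ne_zero hcosne)]
    linear_combination (-(a * b * γ 0 1 * γ 1 1 * Complex.I) / 2) * hcos
      + (-(a * b * Complex.I) / 2) * hdg2 + hab - (a * b) * Complex.I_sq
end

section
/- Let C_q > 0 and let q₁, q₂ : (0,∞) → ℂ be differentiable with |q₁(t)| ≤ C_q and |q₂(t)| ≤ C_q for all t. Set ν = min(1, 2Re μ). There exists a constant C > 0, depending only on μ and C_q, such that for every λ ∈ ℂ \ {0} and every real t ≥ 2|μ|/|λ|, the matrix Q(t,λ) is invertible and |L(t,λ)| ≤ (2/|λ|)·|Q′(t)| + C·(1/|λ| + t^{−ν}/|λ|^ν)·|Q(t)|. -/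
open Complex Matrix Set

attribute [local instance] Matrix.linftyOpNormedRing Matrix.linftyOpNormedAlgebra

noncomputable def Bmat : Matrix (Fin 2) (Fin 2) ℂ := !![0, 1; -1, 0]
noncomputable def Jmat : Matrix (Fin 2) (Fin 2) ℂ := !![0, 1; 1, 0]
/-- `Q(t) = q₁(t) K + q₂(t) J`. -/
noncomputable def Qm (q₁ q₂ : ℝ → ℂ) (t : ℝ) : Matrix (Fin 2) (Fin 2) ℂ :=
  q₁ t • Kmat + q₂ t • Jmat

/-- `Q(t,λ) = (μ/t) J − λ I`. -/
noncomputable def Qlam (μ : ℂ) (t : ℝ) (lam : ℂ) : Matrix (Fin 2) (Fin 2) ℂ :=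
  (μ / (t : ℂ)) • Jmat - lam • (1 : Matrix (Fin 2) (Fin 2) ℂ)

/-- `L(t,λ) = (d/dt)(Q(t,λ)⁻¹ Q(t)) + Q(t,λ)⁻¹ (Q B Q + Q B Q_λ + Q_λ B Q)`. -/
noncomputable def Lm (μ : ℂ) (q₁ q₂ : ℝ → ℂ) (t : ℝ) (lam : ℂ) :
    Matrix (Fin 2) (Fin 2) ℂ :=
  deriv (fun s : ℝ => (Qlam μ s lam)⁻¹ * Qm q₁ q₂ s) t +
    (Qlam μ t lam)⁻¹ *
      (Qm q₁ q₂ t * Bmat * Qm q₁ q₂ t + Qm q₁ q₂ t * Bmat * Qlam μ t lam +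
        Qlam μ t lam * Bmat * Qm q₁ q₂ t)

/-!
Write `a = μ / t`. Then `Q(t,λ) = a J - λ I` has inverse `(a² - λ²)⁻¹ (a J + λ I)`, of norm
at most `(|λ| - |a|)⁻¹ ≤ 2 / |λ|` when `t |λ| ≥ 2 |μ|`. For `2 × 2` matrices
`Xᵀ B X = (det X) B`; polarising this over the symmetric matrices `Q` and `Q(t,λ)` collapses
`Q B Q + Q B Q(t,λ) + Q(t,λ) B Q` to `-(q₁² + q₂² + 2 a q₂) B`. Differentiating with
`(X⁻¹)' = -X⁻¹ X' X⁻¹` then gives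
`|L| ≤ (2/|λ|) |Q'| + (2 C_q / |λ| + (2 + 4|μ|) / (t|λ|)) |Q|`,
and `1 / (t|λ|) ≤ (2|μ|)^(ν-1) (t|λ|)^(-ν)` because `t|λ| ≥ 2|μ|` and `ν ≤ 1`.
-/

theorem HasDerivAt.ringInverse {𝕜 R : Type*} [NontriviallyNormedField 𝕜] [NormedRing R]
    [HasSummableGeomSeries R] [NormedAlgebra 𝕜 R] {f : 𝕜 → R} {f' : R} {t : 𝕜}
    (hf : HasDerivAt f f' t) (hu : IsUnit (f t)) :
    HasDerivAt (fun s => Ring.inverse (f s))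
      (-(Ring.inverse (f t) * f' * Ring.inverse (f t))) t := by
  obtain ⟨u, hu⟩ := hu
  have h := hasFDerivAt_ringInverse (𝕜 := 𝕜) u
  rw [hu] at h
  rw [← hu, Ring.inverse_unit]
  exact h.comp_hasDerivAt t hf

lemma inv_le_rpow_sub_one_mul_rpow_neg {c x ν : ℝ} (hc : 0 < c) (hx : c ≤ x) (hν : ν ≤ 1) :
    x⁻¹ ≤ c ^ (ν - 1) * x ^ (-ν) := by
  have hx0 : 0 < x := hc.trans_le hx
  calc x⁻¹ = x ^ (ν - 1) * x ^ (-ν) := by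
        rw [← Real.rpow_add hx0, show ν - 1 + -ν = -1 by ring, Real.rpow_neg_one]
    _ ≤ c ^ (ν - 1) * x ^ (-ν) :=
        mul_le_mul_of_nonneg_right (Real.rpow_le_rpow_of_nonpos hc hx (by linarith)) (by positivity)

lemma norm_sq_add_sq_add_two_mul_mul_le {x y a : ℂ} {C : ℝ} (hx : ‖x‖ ≤ C) (hy : ‖y‖ ≤ C) :
    ‖x ^ 2 + y ^ 2 + 2 * a * y‖ ≤ (C + 2 * ‖a‖) * (‖x‖ + ‖y‖) := by
  have h := norm_add₃_le (a := x ^ 2) (b := y ^ 2) (c := 2 * a * y)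
  simp only [norm_pow, norm_mul, Complex.norm_two] at h
  nlinarith [norm_nonneg x, norm_nonneg y, norm_nonneg a]

lemma norm_fin_two (A : Matrix (Fin 2) (Fin 2) ℂ) :
    ‖A‖ = max (‖A 0 0‖ + ‖A 0 1‖) (‖A 1 0‖ + ‖A 1 1‖) := by
  rw [Matrix.linfty_opNorm_def, show (Finset.univ : Finset (Fin 2)) = {0, 1} from rfl,
    Finset.sup_insert, Finset.sup_singleton]
  simp [NNReal.coe_max]

lemma norm_Jmat : ‖Jmat‖ = 1 := by simp [norm_fin_two, Jmat]

lemma norm_Bmat : ‖Bmat‖ = 1 := by simp [norm_fin_two, Bmat]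

lemma Jmat_mul_self : Jmat * Jmat = 1 := by ext i j; fin_cases i <;> fin_cases j <;> simp [Jmat]

lemma Qm_eq (q₁ q₂ : ℝ → ℂ) (t : ℝ) : Qm q₁ q₂ t = !![q₁ t, q₂ t; q₂ t, -q₁ t] := by
  ext i j; fin_cases i <;> fin_cases j <;> simp [Qm, Jmat, Kmat]

lemma norm_Qm (q₁ q₂ : ℝ → ℂ) (t : ℝ) : ‖Qm q₁ q₂ t‖ = ‖q₁ t‖ + ‖q₂ t‖ := by
  rw [Qm_eq, norm_fin_two]; simp [add_comm]

section SmulJmatSubSmulOne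

variable {a b : ℂ}

lemma norm_smul_Jmat_add_smul_one (a b : ℂ) :
    ‖a • Jmat + b • (1 : Matrix (Fin 2) (Fin 2) ℂ)‖ = ‖a‖ + ‖b‖ := by
  rw [norm_fin_two]; simp [Jmat, add_comm]

lemma smul_Jmat_sub_smul_one_mul_inv (h : a ^ 2 ≠ b ^ 2) :
    (a • Jmat - b • (1 : Matrix (Fin 2) (Fin 2) ℂ)) * ((a ^ 2 - b ^ 2)⁻¹ • (a • Jmat + b • 1)) =
      1 := by
  have hprod : (a • Jmat - b • (1 : Matrix (Fin 2) (Fin 2) ℂ)) * (a • Jmat + b • 1) =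
      (a ^ 2 - b ^ 2) • 1 := by
    simp only [sub_mul, mul_add, smul_mul_smul, Jmat_mul_self, mul_one, one_mul]
    module
  rw [mul_smul_comm, hprod, smul_smul, inv_mul_cancel₀ (sub_ne_zero.2 h), one_smul]

lemma sq_ne_sq_of_norm_lt (h : ‖a‖ < ‖b‖) : a ^ 2 ≠ b ^ 2 := fun hab => by
  have := congrArg norm hab
  simp only [norm_pow] at this
  nlinarith [norm_nonneg a]

lemma isUnit_smul_Jmat_sub_smul_one (h : ‖a‖ < ‖b‖) :
    IsUnit (a • Jmat - b • (1 : Matrix (Fin 2) (Fin 2) ℂ)) :=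
  IsUnit.of_mul_eq_one _ (smul_Jmat_sub_smul_one_mul_inv (sq_ne_sq_of_norm_lt h))

lemma norm_inv_smul_Jmat_sub_smul_one_le (h : ‖a‖ < ‖b‖) :
    ‖(a • Jmat - b • (1 : Matrix (Fin 2) (Fin 2) ℂ))⁻¹‖ ≤ (‖b‖ - ‖a‖)⁻¹ := by
  rw [Matrix.inv_eq_right_inv (smul_Jmat_sub_smul_one_mul_inv (sq_ne_sq_of_norm_lt h)),
    norm_smul, norm_inv, norm_smul_Jmat_add_smul_one]
  have hlow : (‖b‖ - ‖a‖) * (‖a‖ + ‖b‖) ≤ ‖a ^ 2 - b ^ 2‖ := by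
    have := norm_sub_norm_le (b ^ 2) (a ^ 2)
    rw [norm_sub_rev, norm_pow, norm_pow] at this
    nlinarith
  have hpos : 0 < (‖b‖ - ‖a‖) * (‖a‖ + ‖b‖) := by
    have := norm_nonneg a; apply mul_pos <;> linarith
  calc ‖a ^ 2 - b ^ 2‖⁻¹ * (‖a‖ + ‖b‖) ≤ ((‖b‖ - ‖a‖) * (‖a‖ + ‖b‖))⁻¹ * (‖a‖ + ‖b‖) := by
        gcongr
    _ = (‖b‖ - ‖a‖)⁻¹ := by
        have : ‖a‖ + ‖b‖ ≠ 0 := by nlinarith [norm_nonneg a]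
        field_simp

end SmulJmatSubSmulOne

lemma hasDerivAt_Qlam (μ lam : ℂ) {t : ℝ} (ht : t ≠ 0) :
    HasDerivAt (fun s => Qlam μ s lam) ((-(μ / (t : ℂ) ^ 2)) • Jmat) t := by
  have h : HasDerivAt (fun s : ℝ => μ / (s : ℂ)) (-(μ / (t : ℂ) ^ 2)) t := by
    refine ((hasDerivAt_const t μ).fun_div (hasDerivAt_id' t).ofReal_comp
      (by exact_mod_cast ht)).congr_deriv ?_
    simp only [zero_mul, ofReal_one, mul_one, zero_sub]; ring
  exact (h.smul_const Jmat).sub_const _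

lemma hasDerivAt_Qm {q₁ q₂ : ℝ → ℂ} {t : ℝ} (h₁ : DifferentiableAt ℝ q₁ t)
    (h₂ : DifferentiableAt ℝ q₂ t) :
    HasDerivAt (Qm q₁ q₂) (deriv q₁ t • Kmat + deriv q₂ t • Jmat) t :=
  (h₁.hasDerivAt.smul_const Kmat).add (h₂.hasDerivAt.smul_const Jmat)

lemma Qlam_eq (μ : ℂ) (t : ℝ) (lam : ℂ) : Qlam μ t lam = !![-lam, μ / t; μ / t, -lam] := by
  ext i j; fin_cases i <;> fin_cases j <;> simp [Qlam, Jmat]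

lemma Qm_Bmat_terms_eq (μ : ℂ) (q₁ q₂ : ℝ → ℂ) (t : ℝ) (lam : ℂ) :
    Qm q₁ q₂ t * Bmat * Qm q₁ q₂ t + Qm q₁ q₂ t * Bmat * Qlam μ t lam +
        Qlam μ t lam * Bmat * Qm q₁ q₂ t =
      -(q₁ t ^ 2 + q₂ t ^ 2 + 2 * (μ / t) * q₂ t) • Bmat := by
  rw [Qm_eq, Qlam_eq]
  ext i j; fin_cases i <;> fin_cases j <;>
    simp [Bmat] <;> ring

lemma Lm_eq (μ : ℂ) {q₁ q₂ : ℝ → ℂ} {t : ℝ} (lam : ℂ) (ht : t ≠ 0)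
    (h₁ : DifferentiableAt ℝ q₁ t) (h₂ : DifferentiableAt ℝ q₂ t)
    (hu : IsUnit (Qlam μ t lam)) :
    Lm μ q₁ q₂ t lam =
      -((Qlam μ t lam)⁻¹ * ((-(μ / (t : ℂ) ^ 2)) • Jmat) * (Qlam μ t lam)⁻¹ * Qm q₁ q₂ t) +
        (Qlam μ t lam)⁻¹ * (deriv q₁ t • Kmat + deriv q₂ t • Jmat) -
        (q₁ t ^ 2 + q₂ t ^ 2 + 2 * (μ / t) * q₂ t) • ((Qlam μ t lam)⁻¹ * Bmat) := by
  have hd := ((hasDerivAt_Qlam μ lam ht).ringInverse hu).fun_mul (hasDerivAt_Qm h₁ h₂)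
  simp only [← Matrix.nonsing_inv_eq_ringInverse] at hd
  have hderiv : deriv (fun s => (Qlam μ s lam)⁻¹ * Qm q₁ q₂ s) t =
      -((Qlam μ t lam)⁻¹ * ((-(μ / (t : ℂ) ^ 2)) • Jmat) * (Qlam μ t lam)⁻¹) * Qm q₁ q₂ t +
        (Qlam μ t lam)⁻¹ * (deriv q₁ t • Kmat + deriv q₂ t • Jmat) := hd.deriv
  rw [Lm, hderiv, Qm_Bmat_terms_eq]
  simp only [neg_mul, Matrix.mul_smul, Matrix.smul_mul, mul_assoc]
  module

lemma norm_Lm_le_of_isUnit {μ : ℂ} {q₁ q₂ : ℝ → ℂ} {t Cq : ℝ} {lam : ℂ} (ht : 0 < t)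
    (h₁ : DifferentiableAt ℝ q₁ t) (h₂ : DifferentiableAt ℝ q₂ t)
    (hq₁ : ‖q₁ t‖ ≤ Cq) (hq₂ : ‖q₂ t‖ ≤ Cq) (hu : IsUnit (Qlam μ t lam)) :
    ‖Lm μ q₁ q₂ t lam‖ ≤
      ‖(Qlam μ t lam)⁻¹‖ ^ 2 * (‖μ‖ / t ^ 2) * ‖Qm q₁ q₂ t‖ +
        ‖(Qlam μ t lam)⁻¹‖ * ‖deriv q₁ t • Kmat + deriv q₂ t • Jmat‖ +
        ‖(Qlam μ t lam)⁻¹‖ * ((Cq + 2 * (‖μ‖ / t)) * ‖Qm q₁ q₂ t‖) := by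
  set R := (Qlam μ t lam)⁻¹
  have hJ : ‖(-(μ / (t : ℂ) ^ 2)) • Jmat‖ = ‖μ‖ / t ^ 2 := by
    rw [norm_smul, norm_Jmat, mul_one, norm_neg, norm_div, norm_pow, Complex.norm_real,
      Real.norm_of_nonneg ht.le]
  have hβ : ‖q₁ t ^ 2 + q₂ t ^ 2 + 2 * (μ / t) * q₂ t‖ ≤ (Cq + 2 * (‖μ‖ / t)) * ‖Qm q₁ q₂ t‖ := by
    have := norm_sq_add_sq_add_two_mul_mul_le (a := μ / t) hq₁ hq₂
    rwa [norm_div, Complex.norm_real, Real.norm_of_nonneg ht.le, ← norm_Qm] at this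
  have hB : ‖R * Bmat‖ ≤ ‖R‖ := by simpa [norm_Bmat] using norm_mul_le R Bmat
  rw [Lm_eq μ lam ht.ne' h₁ h₂ hu]
  refine (norm_sub_le _ _).trans (add_le_add ((norm_add_le _ _).trans (add_le_add ?_ ?_)) ?_)
  · rw [norm_neg]
    calc _ ≤ ‖R‖ * ‖(-(μ / (t : ℂ) ^ 2)) • Jmat‖ * ‖R‖ * ‖Qm q₁ q₂ t‖ := by
          refine (norm_mul_le _ _).trans ?_
          gcongr
          exact norm_mul₃_le
      _ = _ := by rw [hJ]; ring
  · exact norm_mul_le _ _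
  · rw [norm_smul]
    calc _ ≤ (Cq + 2 * (‖μ‖ / t)) * ‖Qm q₁ q₂ t‖ * ‖R‖ :=
          mul_le_mul hβ hB (norm_nonneg _) ((norm_nonneg _).trans hβ)
      _ = _ := by ring

section Resolvent

variable {μ lam : ℂ} {t : ℝ}

lemma norm_div_ofReal_le (ht : 0 < t) (hμt : 2 * ‖μ‖ ≤ t * ‖lam‖) :
    ‖μ / (t : ℂ)‖ ≤ ‖lam‖ / 2 := by
  rw [norm_div, Complex.norm_real, Real.norm_of_nonneg ht.le, div_le_div_iff₀ ht two_pos]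
  linarith

lemma norm_div_ofReal_lt (hlam : lam ≠ 0) (ht : 0 < t) (hμt : 2 * ‖μ‖ ≤ t * ‖lam‖) :
    ‖μ / (t : ℂ)‖ < ‖lam‖ :=
  (norm_div_ofReal_le ht hμt).trans_lt (half_lt_self (norm_pos_iff.2 hlam))

lemma isUnit_Qlam (hlam : lam ≠ 0) (ht : 0 < t) (hμt : 2 * ‖μ‖ ≤ t * ‖lam‖) :
    IsUnit (Qlam μ t lam) :=
  isUnit_smul_Jmat_sub_smul_one (norm_div_ofReal_lt hlam ht hμt)

lemma norm_Qlam_inv_le (hlam : lam ≠ 0) (ht : 0 < t) (hμt : 2 * ‖μ‖ ≤ t * ‖lam‖) :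
    ‖(Qlam μ t lam)⁻¹‖ ≤ 2 / ‖lam‖ := by
  refine (norm_inv_smul_Jmat_sub_smul_one_le (norm_div_ofReal_lt hlam ht hμt)).trans ?_
  have hL := norm_pos_iff.2 hlam
  rw [inv_le_comm₀ (by linarith [norm_div_ofReal_le ht hμt]) (by positivity), inv_div]
  linarith [norm_div_ofReal_le ht hμt]

end Resolvent

lemma norm_Lm_le {μ : ℂ} {q₁ q₂ : ℝ → ℂ} {t Cq : ℝ} {lam : ℂ} (hlam : lam ≠ 0) (ht : 0 < t)
    (hμt : 2 * ‖μ‖ ≤ t * ‖lam‖) (h₁ : DifferentiableAt ℝ q₁ t) (h₂ : DifferentiableAt ℝ q₂ t)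
    (hq₁ : ‖q₁ t‖ ≤ Cq) (hq₂ : ‖q₂ t‖ ≤ Cq) :
    ‖Lm μ q₁ q₂ t lam‖ ≤
      2 / ‖lam‖ * ‖deriv q₁ t • Kmat + deriv q₂ t • Jmat‖ +
        (2 * Cq * (1 / ‖lam‖) + (2 + 4 * ‖μ‖) * (t * ‖lam‖)⁻¹) * ‖Qm q₁ q₂ t‖ := by
  refine (norm_Lm_le_of_isUnit ht h₁ h₂ hq₁ hq₂ (isUnit_Qlam hlam ht hμt)).trans ?_
  have hr := norm_Qlam_inv_le hlam ht hμt
  set r := ‖(Qlam μ t lam)⁻¹‖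
  have hL : 0 < ‖lam‖ := norm_pos_iff.2 hlam
  have hCq : 0 ≤ Cq + 2 * (‖μ‖ / t) := by
    have := (norm_nonneg _).trans hq₁; positivity
  have hr2 : r ^ 2 * (‖μ‖ / t ^ 2) ≤ 2 / (t * ‖lam‖) := by
    calc r ^ 2 * (‖μ‖ / t ^ 2) ≤ (2 / ‖lam‖) ^ 2 * (‖μ‖ / t ^ 2) := by gcongr
      _ = 2 / (t * ‖lam‖) * (2 * ‖μ‖ / (t * ‖lam‖)) := by field_simp
      _ ≤ 2 / (t * ‖lam‖) * 1 := by
          gcongr; rw [div_le_one (by positivity)]; exact hμt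
      _ = 2 / (t * ‖lam‖) := mul_one _
  calc _ ≤ 2 / (t * ‖lam‖) * ‖Qm q₁ q₂ t‖ +
          2 / ‖lam‖ * ‖deriv q₁ t • Kmat + deriv q₂ t • Jmat‖ +
          2 / ‖lam‖ * ((Cq + 2 * (‖μ‖ / t)) * ‖Qm q₁ q₂ t‖) := by gcongr
    _ = _ := by field_simp; ring

theorem stmt11_general (μ : ℂ) (hμ : 0 < μ.re) (Cq : ℝ)
    (q₁ q₂ : ℝ → ℂ)
    (hdiff : ∀ t : ℝ, 0 < t → DifferentiableAt ℝ q₁ t ∧ DifferentiableAt ℝ q₂ t)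
    (hbdd : ∀ t : ℝ, 0 < t → ‖q₁ t‖ ≤ Cq ∧ ‖q₂ t‖ ≤ Cq) :
    ∃ C : ℝ, 0 < C ∧ ∀ lam : ℂ, lam ≠ 0 → ∀ t : ℝ, 2 * ‖μ‖ / ‖lam‖ ≤ t →
      IsUnit (Qlam μ t lam) ∧
      ‖Lm μ q₁ q₂ t lam‖ ≤
        (2 / ‖lam‖) * ‖deriv q₁ t • Kmat + deriv q₂ t • Jmat‖ +
          C * (1 / ‖lam‖ + t ^ (-(min 1 (2 * μ.re))) / ‖lam‖ ^ (min 1 (2 * μ.re))) *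
            ‖Qm q₁ q₂ t‖ := by
  set ν := min 1 (2 * μ.re)
  have hμ0 : 0 < ‖μ‖ := norm_pos_iff.2 fun h => by simp [h] at hμ
  set C := max (2 * Cq) ((2 + 4 * ‖μ‖) * (2 * ‖μ‖) ^ (ν - 1))
  refine ⟨C, lt_max_of_lt_right (by positivity), fun lam hlam t ht => ?_⟩
  have hL : 0 < ‖lam‖ := norm_pos_iff.2 hlam
  have hμt : 2 * ‖μ‖ ≤ t * ‖lam‖ := by rwa [div_le_iff₀ hL] at ht
  have ht0 : 0 < t := pos_of_mul_pos_left ((by positivity : (0 : ℝ) < 2 * ‖μ‖).trans_le hμt) hL.le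
  obtain ⟨h₁, h₂⟩ := hdiff t ht0
  obtain ⟨hq₁, hq₂⟩ := hbdd t ht0
  refine ⟨isUnit_Qlam hlam ht0 hμt, (norm_Lm_le hlam ht0 hμt h₁ h₂ hq₁ hq₂).trans ?_⟩
  have hdecay : (t * ‖lam‖)⁻¹ ≤ (2 * ‖μ‖) ^ (ν - 1) * (t ^ (-ν) / ‖lam‖ ^ ν) := by
    rw [div_eq_mul_inv, ← Real.rpow_neg hL.le, ← Real.mul_rpow ht0.le hL.le]
    exact inv_le_rpow_sub_one_mul_rpow_neg (by positivity) hμt (min_le_left _ _)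
  gcongr
  calc 2 * Cq * (1 / ‖lam‖) + (2 + 4 * ‖μ‖) * (t * ‖lam‖)⁻¹
      ≤ C * (1 / ‖lam‖) + (2 + 4 * ‖μ‖) * (2 * ‖μ‖) ^ (ν - 1) * (t ^ (-ν) / ‖lam‖ ^ ν) := by
        rw [mul_assoc _ _ (t ^ (-ν) / _)]
        gcongr
        exact le_max_left _ _
    _ ≤ C * (1 / ‖lam‖ + t ^ (-ν) / ‖lam‖ ^ ν) := by
        rw [mul_add]; gcongr; exact le_max_right _ _

theorem stmt11 (μ : ℂ) (hμ : 0 < μ.re) (Cq : ℝ) (hCq : 0 < Cq)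
    (q₁ q₂ : ℝ → ℂ)
    (hdiff : ∀ t : ℝ, 0 < t → DifferentiableAt ℝ q₁ t ∧ DifferentiableAt ℝ q₂ t)
    (hbdd : ∀ t : ℝ, 0 < t → ‖q₁ t‖ ≤ Cq ∧ ‖q₂ t‖ ≤ Cq) :
    ∃ C : ℝ, 0 < C ∧ ∀ lam : ℂ, lam ≠ 0 → ∀ t : ℝ, 2 * ‖μ‖ / ‖lam‖ ≤ t →
      IsUnit (Qlam μ t lam) ∧
      ‖Lm μ q₁ q₂ t lam‖ ≤
        (2 / ‖lam‖) * ‖deriv q₁ t • Kmat + deriv q₂ t • Jmat‖ +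
          C * (1 / ‖lam‖ + t ^ (-(min 1 (2 * μ.re))) / ‖lam‖ ^ (min 1 (2 * μ.re))) *
            ‖Qm q₁ q₂ t‖ :=
  stmt11_general μ hμ Cq q₁ q₂ hdiff hbdd
end
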